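/- With T cut by the x-axis into T⁺ and T⁻, the three functions φ₁(x) = 1, φ₂(x) = t·(x − x₀), φ₃(x) = β(x)⁻¹ n·(x − x₀), where x₀ lies on the cut line, n is the unit normal to the cut pointing from T⁺ to T⁻, t is the rotation of n by 90°, and β equals β⁺ on T⁺ and β⁻ on T⁻, form a basis of the space of broken linear functions on T satisfying the interface conditions. -/

import Mathlib

/-!
`T ⊂ ℝ²` is cut by the x-axis into `T⁺ = T ∩ {x₂ ≥ 0}` and `T⁻ = T ∩ {x₂ ≤ 0}`.
A broken linear function is a pair of affine functions
`q⁺(x,y) = a⁺ + b⁺ x + c⁺ y` on `T⁺`, `q⁻(x,y) = a⁻ + b⁻ x + c⁻ y` on `T⁻`,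
encoded by the coefficient pair `((a⁺,b⁺,c⁺),(a⁻,b⁻,c⁻))`, continuous across
the cut line (`q⁺(x,0) = q⁻(x,0)` for all `x`) and with continuous scaled
normal derivative `β⁺ ∂q⁺/∂n = β⁻ ∂q⁻/∂n`, where `n = (0,-1)` is the unit
normal to the cut pointing from `T⁺` to `T⁻`, so the condition reads
`β⁺ c⁺ = β⁻ c⁻`.

The three functions of the statement are, with `x₀ = (x₀₁, 0)` on the cut line,
`n = (0,-1)`, and `t = (-n₂, n₁) = (1,0)`:
* `φ₁(x,y) = 1`, coefficients `(1,0,0)` on both pieces;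
* `φ₂(x,y) = t·((x,y) − x₀) = x − x₀₁`, coefficients `(−x₀₁,1,0)` on both pieces;
* `φ₃(x,y) = β(x,y)⁻¹ n·((x,y) − x₀) = −β^{±}⁻¹ y`, coefficients
  `(0,0,−(β⁺)⁻¹)` on `T⁺` and `(0,0,−(β⁻)⁻¹)` on `T⁻`.
-/

def brokenSpace (βp βm : ℝ) : Submodule ℝ ((ℝ × ℝ × ℝ) × (ℝ × ℝ × ℝ)) where
  carrier := {p | (∀ x : ℝ, p.1.1 + p.1.2.1 * x = p.2.1 + p.2.2.1 * x) ∧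
      βp * p.1.2.2 = βm * p.2.2.2}
  add_mem' := by
    rintro a b ⟨ha1, ha2⟩ ⟨hb1, hb2⟩
    refine ⟨fun x => ?_, ?_⟩
    · have h1 := ha1 x; have h2 := hb1 x
      simp only [Prod.fst_add, Prod.snd_add] at *
      linarith
    · simp only [Prod.fst_add, Prod.snd_add] at *
      ring_nf
      linarith
  zero_mem' := by simp
  smul_mem' := by
    rintro r a ⟨ha1, ha2⟩
    refine ⟨fun x => ?_, ?_⟩
    · have h1 := ha1 x
      simp only [Prod.smul_fst, Prod.smul_snd, smul_eq_mul] at *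
      linear_combination r * h1
    · simp only [Prod.smul_fst, Prod.smul_snd, smul_eq_mul] at *
      linear_combination r * ha2

theorem forall_add_mul_eq_add_mul_iff {R : Type*} [Ring R] {a b a' b' : R} :
    (∀ x : R, a + b * x = a' + b' * x) ↔ a = a' ∧ b = b' := by
  refine ⟨fun h => ?_, fun ⟨ha, hb⟩ _ => by rw [ha, hb]⟩
  have h₀ := h 0
  have h₁ := h 1
  simp only [mul_zero, add_zero, mul_one] at h₀ h₁
  exact ⟨h₀, by rwa [h₀, add_right_inj] at h₁⟩

namespace brokenSpace

variable {βp βm : ℝ}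

theorem mem_iff {p : (ℝ × ℝ × ℝ) × (ℝ × ℝ × ℝ)} :
    p ∈ brokenSpace βp βm ↔
      p.1.1 = p.2.1 ∧ p.1.2.1 = p.2.2.1 ∧ βp * p.1.2.2 = βm * p.2.2.2 := by
  change (∀ x : ℝ, _) ∧ _ ↔ _
  rw [forall_add_mul_eq_add_mul_iff, and_assoc]

def one : (ℝ × ℝ × ℝ) × (ℝ × ℝ × ℝ) := ((1, 0, 0), (1, 0, 0))

def tangent (x₀₁ : ℝ) : (ℝ × ℝ × ℝ) × (ℝ × ℝ × ℝ) := ((-x₀₁, 1, 0), (-x₀₁, 1, 0))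

noncomputable def normal (βp βm : ℝ) : (ℝ × ℝ × ℝ) × (ℝ × ℝ × ℝ) :=
  ((0, 0, -βp⁻¹), (0, 0, -βm⁻¹))

theorem one_mem : one ∈ brokenSpace βp βm :=
  mem_iff.2 ⟨rfl, rfl, by simp only [one, mul_zero]⟩

theorem tangent_mem (x₀₁ : ℝ) : tangent x₀₁ ∈ brokenSpace βp βm :=
  mem_iff.2 ⟨rfl, rfl, by simp only [tangent, mul_zero]⟩

theorem normal_mem (hβp : βp ≠ 0) (hβm : βm ≠ 0) : normal βp βm ∈ brokenSpace βp βm :=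
  mem_iff.2 ⟨rfl, rfl, by
    simp only [normal, mul_neg, mul_inv_cancel₀ hβp, mul_inv_cancel₀ hβm]⟩

/-- The `T⁺` parts alone are already independent. -/
theorem linearIndependent_one_tangent_normal (hβp : βp ≠ 0) (x₀₁ : ℝ) :
    LinearIndependent ℝ ![one, tangent x₀₁, normal βp βm] := by
  refine .of_comp (LinearMap.fst ℝ (ℝ × ℝ × ℝ) (ℝ × ℝ × ℝ)) ?_
  rw [Fintype.linearIndependent_iff]
  intro g hg
  simp only [Fin.sum_univ_three, Function.comp_apply, Matrix.cons_val_zero, Matrix.cons_val_one,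
    Matrix.cons_val_two, Matrix.head_cons, Matrix.tail_cons, LinearMap.fst_apply, one, tangent,
    normal, Prod.smul_mk, smul_eq_mul, Prod.mk_add_mk, Prod.mk_eq_zero] at hg
  obtain ⟨h₀, h₁, h₂⟩ := hg
  have hg₁ : g 1 = 0 := by linarith
  have hg₂ : g 2 = 0 := by simpa [hβp] using h₂
  have hg₀ : g 0 = 0 := by simpa [hg₁] using h₀
  intro i
  fin_cases i <;> assumption

/-- The coefficient of `normal` is the common flux `-β⁺c⁺ = -β⁻c⁻`. -/
theorem eq_combination_of_mem (hβp : βp ≠ 0) (hβm : βm ≠ 0) (x₀₁ : ℝ)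
    {p : (ℝ × ℝ × ℝ) × (ℝ × ℝ × ℝ)} (hp : p ∈ brokenSpace βp βm) :
    (p.1.1 + p.1.2.1 * x₀₁) • one + p.1.2.1 • tangent x₀₁ + (-(βp * p.1.2.2)) • normal βp βm
      = p := by
  obtain ⟨⟨a, b, c⟩, ⟨a', b', c'⟩⟩ := p
  obtain ⟨ha, hb, hc⟩ := mem_iff.1 hp
  dsimp only at ha hb
  subst ha hb
  simp only [one, tangent, normal, Prod.smul_mk, smul_eq_mul, Prod.mk_add_mk] at hc ⊢
  refine Prod.ext (Prod.ext (by ring) (Prod.ext (by ring) ?_))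
    (Prod.ext (by ring) (Prod.ext (by ring) ?_))
  · field_simp
    ring
  · field_simp
    linarith

theorem span_one_tangent_normal (hβp : βp ≠ 0) (hβm : βm ≠ 0) (x₀₁ : ℝ) :
    Submodule.span ℝ {one, tangent x₀₁, normal βp βm} = brokenSpace βp βm := by
  refine le_antisymm ?_ fun p hp => Submodule.mem_span_triple.2 ⟨_, _, _,
    eq_combination_of_mem hβp hβm x₀₁ hp⟩
  rw [Submodule.span_le]
  rintro _ (rfl | rfl | rfl)
  exacts [one_mem, tangent_mem x₀₁, normal_mem hβp hβm]

end brokenSpace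

/-- With `x₀ = (x₀₁,0)` on the cut line, `n = (0,-1)` the unit
normal pointing from `T⁺` to `T⁻`, `t = (1,0)` its 90° rotation, and `β = β⁺`
on `T⁺`, `β⁻` on `T⁻`, the three broken linear functions `φ₁ = 1`,
`φ₂ = t·(x − x₀)`, `φ₃ = β⁻¹ n·(x − x₀)` form a basis of the broken linear
space: they are linearly independent and they span it. -/
theorem broken_basis (βp βm : ℝ) (hβp : 0 < βp) (hβm : 0 < βm) (x₀₁ : ℝ) :
    LinearIndependent ℝ
      ![(((1 : ℝ), (0 : ℝ), (0 : ℝ)), ((1 : ℝ), (0 : ℝ), (0 : ℝ))),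
        (((-x₀₁ : ℝ), (1 : ℝ), (0 : ℝ)), ((-x₀₁ : ℝ), (1 : ℝ), (0 : ℝ))),
        (((0 : ℝ), (0 : ℝ), (-βp⁻¹ : ℝ)), ((0 : ℝ), (0 : ℝ), (-βm⁻¹ : ℝ)))] ∧
    Submodule.span ℝ
      {(((1 : ℝ), (0 : ℝ), (0 : ℝ)), ((1 : ℝ), (0 : ℝ), (0 : ℝ))),
        (((-x₀₁ : ℝ), (1 : ℝ), (0 : ℝ)), ((-x₀₁ : ℝ), (1 : ℝ), (0 : ℝ))),
        (((0 : ℝ), (0 : ℝ), (-βp⁻¹ : ℝ)), ((0 : ℝ), (0 : ℝ), (-βm⁻¹ : ℝ)))} =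
      brokenSpace βp βm :=
  ⟨brokenSpace.linearIndependent_one_tangent_normal hβp.ne' x₀₁,
    brokenSpace.span_one_tangent_normal hβp.ne' hβm.ne' x₀₁⟩
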